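/- arXiv:math/0509518 — 2 statements merged into one kernel-verified Lean document; each statement's English description precedes it below -/
import Mathlib

section
/- Every complete, locally compact rooted real tree (T,d,ρ) admits an isometric embedding f : T → ℓ¹(ℕ) with f(ρ) = 0; in particular, every pointed isometry class of complete locally compact rooted real trees has a representative in 𝕋_{ℓ¹}. -/
/-!
A real tree is `0`-hyperbolic: the geodesics from `ρ` to `x` and to `y` agree exactly up to
time `(x|y)_ρ`, since going back from `x` to their last common point and then out to `y` is an
injective path, hence runs along the geodesic from `x` to `y`. A complete, locally compact real
tree is proper (every point lies on a geodesic from `ρ`, so compactness of balls around `ρ`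
propagates outwards), hence separable. For a dense sequence `(u k)`, the running maxima
`c n x = max_{k < n} (x|u k)_ρ` increase to `dist ρ x`, and `x ↦ (c (n+1) x - c n x)_n` is the
embedding: by `0`-hyperbolicity its `ℓ¹` distances telescope to
`dist ρ x + dist ρ y - 2 (x|y)_ρ = dist x y`.
-/

/-- The property of `f` being the (unique) isometric arc-parametrisation joining `s` to `t`
in a metric space. -/
def arcProp {T : Type*} [MetricSpace T] (s t : T)
    (f : Set.Icc (0 : ℝ) (dist s t) → T) : Prop :=
  Isometry f ∧ f ⟨0, Set.left_mem_Icc.2 dist_nonneg⟩ = s ∧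
    f ⟨dist s t, Set.right_mem_Icc.2 dist_nonneg⟩ = t

/-- A metric space is a real tree if any two points are joined by a unique isometric arc,
and every continuous injective path has as image the corresponding arc. -/
def IsRealTree (T : Type*) [MetricSpace T] : Prop :=
  (∀ s t : T, ∃! f : Set.Icc (0 : ℝ) (dist s t) → T, arcProp s t f) ∧
  (∀ q : Set.Icc (0 : ℝ) (1 : ℝ) → T, Continuous q → Function.Injective q →
    ∀ f : Set.Icc (0 : ℝ)
        (dist (q ⟨0, Set.left_mem_Icc.2 zero_le_one⟩)
              (q ⟨1, Set.right_mem_Icc.2 zero_le_one⟩)) → T,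
      arcProp (q ⟨0, Set.left_mem_Icc.2 zero_le_one⟩)
              (q ⟨1, Set.right_mem_Icc.2 zero_le_one⟩) f →
      Set.range q = Set.range f)
noncomputable section

/-- The space `ℓ¹(ℕ)` of summable real sequences. -/
abbrev ellOne : Type := lp (fun _ : ℕ => ℝ) 1

/-- The space `𝕋_{ℓ¹}` of subsets of `ℓ¹(ℕ)` which, rooted at `0`, are complete locally compact
rooted real trees. -/
def TreeL1 : Type :=
  {T : Set ellOne // (0 : ellOne) ∈ T ∧ IsComplete T ∧ LocallyCompactSpace ↥T ∧ IsRealTree ↥T}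

/-- Two pointed metric spaces are pointed isometric if there is a base-point preserving
bijective isometry between them. -/
def PointedIsometric (X₁ : Type*) [MetricSpace X₁] (ρ₁ : X₁)
    (X₂ : Type*) [MetricSpace X₂] (ρ₂ : X₂) : Prop :=
  ∃ f : X₁ → X₂, Isometry f ∧ Function.Bijective f ∧ f ρ₁ = ρ₂

open Set Metric Filter Topology

section Arc
variable {T : Type*} [MetricSpace T] {s t : T} {f : Icc (0 : ℝ) (dist s t) → T}

theorem arcProp.dist_left (hf : arcProp s t f) (v : Icc (0 : ℝ) (dist s t)) :
    dist s (f v) = v := by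
  have h := hf.1.dist_eq ⟨0, left_mem_Icc.2 dist_nonneg⟩ v
  rw [hf.2.1] at h
  rw [h, Subtype.dist_eq, Real.dist_eq, zero_sub, abs_neg, abs_of_nonneg v.2.1]

theorem arcProp.dist_right (hf : arcProp s t f) (v : Icc (0 : ℝ) (dist s t)) :
    dist (f v) t = dist s t - v := by
  have h := hf.1.dist_eq v ⟨dist s t, right_mem_Icc.2 dist_nonneg⟩
  rw [hf.2.2] at h
  rw [h, Subtype.dist_eq, Real.dist_eq, abs_sub_comm, abs_of_nonneg (sub_nonneg.2 v.2.2)]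

end Arc

namespace IsRealTree
variable {T : Type*} [MetricSpace T] (hT : IsRealTree T)

/-- The geodesic from `s` to `t`, extended to `ℝ` by being constant outside `[0, dist s t]`. -/
def geodesic (s t : T) (r : ℝ) : T :=
  (hT.1 s t).exists.choose (projIcc 0 (dist s t) dist_nonneg r)

variable {hT} {s t : T} {a b : ℝ}

theorem arcProp_geodesic (s t : T) :
    arcProp s t fun v : Icc (0 : ℝ) (dist s t) => hT.geodesic s t v := by
  have h := (hT.1 s t).exists.choose_spec
  simpa only [geodesic, projIcc_val] using h

theorem geodesic_zero : hT.geodesic s t 0 = s := (arcProp_geodesic s t).2.1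

theorem geodesic_dist : hT.geodesic s t (dist s t) = t := (arcProp_geodesic s t).2.2

theorem continuous_geodesic : Continuous (hT.geodesic s t) :=
  (hT.1 s t).exists.choose_spec.1.continuous.comp continuous_projIcc

theorem dist_geodesic (ha : a ∈ Icc 0 (dist s t)) (hb : b ∈ Icc 0 (dist s t)) :
    dist (hT.geodesic s t a) (hT.geodesic s t b) = |a - b| :=
  (arcProp_geodesic s t).1.dist_eq ⟨a, ha⟩ ⟨b, hb⟩

theorem dist_geodesic_left (ha : a ∈ Icc 0 (dist s t)) : dist s (hT.geodesic s t a) = a :=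
  (arcProp_geodesic s t).dist_left ⟨a, ha⟩

theorem dist_geodesic_right (ha : a ∈ Icc 0 (dist s t)) :
    dist (hT.geodesic s t a) t = dist s t - a :=
  (arcProp_geodesic s t).dist_right ⟨a, ha⟩

theorem injOn_geodesic : InjOn (hT.geodesic s t) (Icc 0 (dist s t)) := fun a ha b hb hab => by
  simpa [sub_eq_zero] using (dist_geodesic ha hb).symm.trans (dist_eq_zero.2 hab)

theorem geodesic_geodesic (ha : a ∈ Icc 0 (dist s t)) (hb : b ∈ Icc 0 a) :
    hT.geodesic s (hT.geodesic s t a) b = hT.geodesic s t b := by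
  set m := hT.geodesic s t a
  have hm : dist s m = a := dist_geodesic_left ha
  have hsub : ∀ v ∈ Icc 0 (dist s m), v ∈ Icc 0 (dist s t) := fun v hv =>
    ⟨hv.1, hv.2.trans (hm ▸ ha.2)⟩
  have hrestrict : arcProp s m fun v : Icc (0 : ℝ) (dist s m) => hT.geodesic s t v :=
    ⟨fun v w => (arcProp_geodesic s t).1 ⟨v, hsub v v.2⟩ ⟨w, hsub w w.2⟩, geodesic_zero,
      by simp only [hm]; rfl⟩
  have hb' : b ∈ Icc 0 (dist s m) := hm ▸ hb
  exact congrFun ((hT.1 s m).unique (arcProp_geodesic (hT := hT) s m) hrestrict) ⟨b, hb'⟩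

include hT in
theorem dist_add_dist_of_injOn {γ : ℝ → T} {a b c : ℝ} (hγ : ContinuousOn γ (Icc a b))
    (hinj : InjOn γ (Icc a b)) (hc : c ∈ Icc a b) :
    dist (γ a) (γ c) + dist (γ c) (γ b) = dist (γ a) (γ b) := by
  rcases (hc.1.trans hc.2).eq_or_lt with rfl | hab
  · obtain rfl : c = a := le_antisymm hc.2 hc.1
    simp
  set φ : ℝ → ℝ := fun v => a + v * (b - a)
  have hφ : MapsTo φ (Icc 0 1) (Icc a b) := fun v hv =>
    ⟨by nlinarith [hv.1], by nlinarith [hv.2]⟩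
  set q : Icc (0 : ℝ) 1 → T := fun v => γ (φ v)
  have hq : Continuous q :=
    hγ.comp_continuous (by fun_prop) fun v => hφ v.2
  have hqinj : Function.Injective q := fun v w hvw => by
    have := hinj (hφ v.2) (hφ w.2) hvw
    exact Subtype.ext (by simpa [φ, sub_ne_zero.2 hab.ne'] using this)
  have hq0 : q ⟨0, left_mem_Icc.2 zero_le_one⟩ = γ a := by simp [q, φ]
  have hq1 : q ⟨1, right_mem_Icc.2 zero_le_one⟩ = γ b := by simp [q, φ]
  obtain ⟨f, hf, -⟩ :=
    hT.1 (q ⟨0, left_mem_Icc.2 zero_le_one⟩) (q ⟨1, right_mem_Icc.2 zero_le_one⟩)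
  have hcq : γ c ∈ range q := by
    refine ⟨⟨(c - a) / (b - a), div_nonneg (sub_nonneg.2 hc.1) (sub_pos.2 hab).le,
      (div_le_one (sub_pos.2 hab)).2 (by linarith [hc.2])⟩, ?_⟩
    simp [q, φ, div_mul_cancel₀ _ (sub_pos.2 hab).ne']
  obtain ⟨v, hv⟩ : γ c ∈ range f := hT.2 q hq hqinj f hf ▸ hcq
  have h₁ := hf.dist_left v
  have h₂ := hf.dist_right v
  rw [hv] at h₁ h₂
  rw [← hq0, ← hq1]
  linarith
end IsRealTree

section Transfer
variable {X Y : Type*} [MetricSpace X] [MetricSpace Y] {φ : X → Y}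

theorem arcProp.comp_isometry (hφ : Isometry φ) {s t : X} {s' t' : Y} (hs : φ s = s')
    (ht : φ t = t') {f : Icc (0 : ℝ) (dist s t) → X} (hf : arcProp s t f) :
    arcProp s' t' fun v : Icc (0 : ℝ) (dist s' t') =>
      φ (f ⟨v, by rw [← hφ.dist_eq, hs, ht]; exact v.2⟩) := by
  subst hs ht
  refine ⟨fun v w => ?_, congrArg φ hf.2.1, ?_⟩
  · rw [hφ.edist_eq, hf.1.edist_eq]
    rfl
  · exact congrArg φ ((congrArg f (Subtype.ext (hφ.dist_eq s t))).trans hf.2.2)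

theorem IsRealTree.of_isometryEquiv (e : X ≃ᵢ Y) (hX : IsRealTree X) : IsRealTree Y := by
  refine ⟨fun s t => ?_, fun q hq hqinj f hf => ?_⟩
  · obtain ⟨f, hf, huniq⟩ := hX.1 (e.symm s) (e.symm t)
    refine ⟨_, hf.comp_isometry e.isometry (e.apply_symm_apply s) (e.apply_symm_apply t),
      fun g hg => funext fun v => ?_⟩
    have := huniq _ (hg.comp_isometry e.symm.isometry rfl rfl)
    simp [← this]
  · have hr := hX.2 (e.symm ∘ q) (e.symm.continuous.comp hq) (e.symm.injective.comp hqinj) _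
      (hf.comp_isometry e.symm.isometry rfl rfl)
    apply (image_injective.2 e.symm.injective)
    rw [← range_comp, hr]
    ext y
    constructor
    · rintro ⟨v, rfl⟩
      exact ⟨_, mem_range_self _, rfl⟩
    · rintro ⟨_, ⟨w, rfl⟩, rfl⟩
      exact ⟨⟨w, by simpa only [Function.comp_apply, e.symm.dist_eq] using w.2⟩, rfl⟩
end Transfer

section GromovProduct
variable {X : Type*} [MetricSpace X] (ρ x y : X)

def gromovProduct : ℝ := (dist ρ x + dist ρ y - dist x y) / 2

theorem gromovProduct_comm : gromovProduct ρ x y = gromovProduct ρ y x := by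
  rw [gromovProduct, gromovProduct, dist_comm x y, add_comm (dist ρ x)]

theorem gromovProduct_nonneg : 0 ≤ gromovProduct ρ x y := by
  have := dist_triangle_left x y ρ
  rw [gromovProduct]
  linarith

theorem gromovProduct_le_dist : gromovProduct ρ x y ≤ dist ρ x := by
  have := dist_triangle ρ x y
  rw [gromovProduct]
  linarith

theorem dist_sub_dist_le_gromovProduct : dist ρ x - dist x y ≤ gromovProduct ρ x y := by
  have := dist_triangle_right ρ x y
  rw [gromovProduct]
  linarith

theorem gromovProduct_self_left : gromovProduct ρ ρ y = 0 := by
  simp [gromovProduct]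

def IsZeroHyperbolic : Prop :=
  ∀ x y z : X, min (gromovProduct ρ x y) (gromovProduct ρ y z) ≤ gromovProduct ρ x z

variable {ρ}

theorem IsZeroHyperbolic.min_eq (h : IsZeroHyperbolic ρ) (z : X) :
    min (gromovProduct ρ x z) (gromovProduct ρ x y) =
      min (gromovProduct ρ y z) (gromovProduct ρ x y) := by
  have hxz := h y x z
  have hyz := h x y z
  rw [gromovProduct_comm ρ y x] at hxz
  exact le_antisymm (le_min (by simpa [min_comm] using hxz) (min_le_right _ _))
    (le_min (by simpa [min_comm] using hyz) (min_le_right _ _))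

end GromovProduct

namespace IsRealTree
variable {T : Type*} [MetricSpace T] (hT : IsRealTree T) (ρ x y : T)

def agreeTimes : Set ℝ :=
  {t ∈ Icc 0 (min (dist ρ x) (dist ρ y)) | hT.geodesic ρ x t = hT.geodesic ρ y t}

variable {hT ρ x y}

theorem isCompact_agreeTimes : IsCompact (hT.agreeTimes ρ x y) :=
  isCompact_Icc.inter_right (isClosed_eq continuous_geodesic continuous_geodesic)

theorem zero_mem_agreeTimes : 0 ∈ hT.agreeTimes ρ x y :=
  ⟨⟨le_rfl, le_min dist_nonneg dist_nonneg⟩, by rw [geodesic_zero, geodesic_zero]⟩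

theorem mem_agreeTimes_of_le {t r : ℝ} (ht : t ∈ hT.agreeTimes ρ x y) (hr : r ∈ Icc 0 t) :
    r ∈ hT.agreeTimes ρ x y := by
  obtain ⟨⟨ht0, htxy⟩, heq⟩ := ht
  refine ⟨⟨hr.1, hr.2.trans htxy⟩, ?_⟩
  rw [← geodesic_geodesic ⟨ht0, htxy.trans (min_le_left _ _)⟩ hr, heq,
    geodesic_geodesic ⟨ht0, htxy.trans (min_le_right _ _)⟩ hr]

theorem mem_agreeTimes_of_geodesic_eq {a b : ℝ} (ha : a ∈ Icc 0 (dist ρ x))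
    (hb : b ∈ Icc 0 (dist ρ y)) (hab : hT.geodesic ρ x a = hT.geodesic ρ y b) :
    a ∈ hT.agreeTimes ρ x y := by
  have : a = b := by rw [← dist_geodesic_left (hT := hT) ha, hab, dist_geodesic_left hb]
  subst this
  exact ⟨⟨ha.1, le_min ha.2 hb.2⟩, hab⟩

variable (hT ρ x y) in
/-- Back from `x` along the geodesic to `ρ` until time `c`, then out along the geodesic to `y`. -/
def detour (c : ℝ) (s : ℝ) : T :=
  if s ≤ dist ρ x - c then hT.geodesic ρ x (dist ρ x - s)
  else hT.geodesic ρ y (s - (dist ρ x - c) + c)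

theorem continuous_detour {c : ℝ} (hc : hT.geodesic ρ x c = hT.geodesic ρ y c) :
    Continuous (hT.detour ρ x y c) :=
  Continuous.if_le (continuous_geodesic.comp (by fun_prop))
    (continuous_geodesic.comp (by fun_prop)) continuous_id continuous_const fun s hs => by
      simp only [hs, sub_sub_cancel, sub_self, zero_add, hc]

theorem injOn_detour {c : ℝ} (hc : IsGreatest (hT.agreeTimes ρ x y) c) :
    InjOn (hT.detour ρ x y c) (Icc 0 (dist ρ x + dist ρ y - 2 * c)) := by
  obtain ⟨⟨⟨hc0, hcxy⟩, -⟩, hmax⟩ := hc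
  have hcx := hcxy.trans (min_le_left _ _)
  have hcy := hcxy.trans (min_le_right _ _)
  have hmemx {s} (hs : s ∈ Icc 0 (dist ρ x + dist ρ y - 2 * c)) (hsc : s ≤ dist ρ x - c) :
      dist ρ x - s ∈ Icc 0 (dist ρ x) := ⟨by linarith, by linarith [hs.1]⟩
  have hmemy {s} (hs : s ∈ Icc 0 (dist ρ x + dist ρ y - 2 * c)) (hsc : ¬s ≤ dist ρ x - c) :
      s - (dist ρ x - c) + c ∈ Icc 0 (dist ρ y) := ⟨by linarith, by linarith [hs.2]⟩
  have hcross {s s'} (hs : s ∈ Icc 0 (dist ρ x + dist ρ y - 2 * c)) (hsc : s ≤ dist ρ x - c)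
      (hs' : s' ∈ Icc 0 (dist ρ x + dist ρ y - 2 * c)) (hs'c : ¬s' ≤ dist ρ x - c) :
      hT.detour ρ x y c s ≠ hT.detour ρ x y c s' := by
    intro h
    simp only [detour, hsc, hs'c, if_true, if_false] at h
    have hle := hmax (mem_agreeTimes_of_geodesic_eq (hmemx hs hsc) (hmemy hs' hs'c) h)
    have hdist := dist_geodesic_left (hT := hT) (hmemx hs hsc)
    rw [h, dist_geodesic_left (hmemy hs' hs'c)] at hdist
    linarith
  intro s hs s' hs' h
  by_cases hsc : s ≤ dist ρ x - c <;> by_cases hs'c : s' ≤ dist ρ x - c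
  · simp only [detour, hsc, hs'c, if_true] at h
    linarith [injOn_geodesic (hmemx hs hsc) (hmemx hs' hs'c) h]
  · exact absurd h (hcross hs hsc hs' hs'c)
  · exact absurd h.symm (hcross hs' hs'c hs hsc)
  · simp only [detour, hsc, hs'c, if_false] at h
    linarith [injOn_geodesic (hmemy hs hsc) (hmemy hs' hs'c) h]

/-- The detour through the last common point `w` of the geodesics from `ρ` to `x` and to `y` is
injective, so `w` lies on the geodesic from `x` to `y`. -/
theorem sSup_agreeTimes : sSup (hT.agreeTimes ρ x y) = gromovProduct ρ x y := by
  set c := sSup (hT.agreeTimes ρ x y)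
  have hc : IsGreatest (hT.agreeTimes ρ x y) c :=
    isCompact_agreeTimes.isGreatest_sSup ⟨0, zero_mem_agreeTimes⟩
  obtain ⟨⟨⟨hc0, hcxy⟩, hw⟩, -⟩ := id hc
  have hcx : c ∈ Icc 0 (dist ρ x) := ⟨hc0, hcxy.trans (min_le_left _ _)⟩
  have hcy : c ∈ Icc 0 (dist ρ y) := ⟨hc0, hcxy.trans (min_le_right _ _)⟩
  have hmid : dist ρ x - c ∈ Icc 0 (dist ρ x + dist ρ y - 2 * c) :=
    ⟨by linarith [hcx.2], by linarith [hcy.2]⟩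
  have key := dist_add_dist_of_injOn (hT := hT) (continuous_detour hw).continuousOn
    (injOn_detour hc) hmid
  have hx : hT.detour ρ x y c 0 = x := by simp [detour, hcx.2, geodesic_dist]
  have hw' : hT.detour ρ x y c (dist ρ x - c) = hT.geodesic ρ y c := by simp [detour, hw]
  have hy : hT.detour ρ x y c (dist ρ x + dist ρ y - 2 * c) = y := by
    rcases hcy.2.eq_or_lt with hyc | hyc
    · rw [show dist ρ x + dist ρ y - 2 * c = dist ρ x - c by linarith, hw', hyc, geodesic_dist]
    · rw [detour, if_neg (by linarith),
        show dist ρ x + dist ρ y - 2 * c - (dist ρ x - c) + c = dist ρ y by ring, geodesic_dist]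
  rw [hx, hw', hy, ← hw, dist_comm, dist_geodesic_right hcx, hw, dist_geodesic_right hcy] at key
  rw [gromovProduct, ← key]
  ring

theorem agreeTimes_eq_Icc : hT.agreeTimes ρ x y = Icc 0 (gromovProduct ρ x y) := by
  rw [← sSup_agreeTimes (hT := hT)]
  refine Subset.antisymm (fun t ht => ⟨ht.1.1, le_csSup isCompact_agreeTimes.bddAbove ht⟩)
    fun t ht => mem_agreeTimes_of_le (isCompact_agreeTimes.sSup_mem ⟨0, zero_mem_agreeTimes⟩) ht

theorem isZeroHyperbolic (hT : IsRealTree T) (ρ : T) : IsZeroHyperbolic ρ := by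
  intro x y z
  set t := min (gromovProduct ρ x y) (gromovProduct ρ y z)
  have ht0 : 0 ≤ t := le_min (gromovProduct_nonneg ρ x y) (gromovProduct_nonneg ρ y z)
  obtain ⟨⟨-, htxy⟩, hxy⟩ : t ∈ hT.agreeTimes ρ x y :=
    by rw [agreeTimes_eq_Icc]; exact ⟨ht0, min_le_left _ _⟩
  obtain ⟨⟨-, htyz⟩, hyz⟩ : t ∈ hT.agreeTimes ρ y z :=
    by rw [agreeTimes_eq_Icc]; exact ⟨ht0, min_le_right _ _⟩
  have : t ∈ hT.agreeTimes ρ x z :=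
    ⟨⟨ht0, le_min (htxy.trans (min_le_left _ _)) (htyz.trans (min_le_right _ _))⟩,
      hxy.trans hyz⟩
  rw [agreeTimes_eq_Icc] at this
  exact this.2

theorem exists_dist_eq (hT : IsRealTree T) (ρ x : T) {r : ℝ} (hr : r ∈ Icc 0 (dist ρ x)) :
    ∃ m, dist ρ m = r ∧ dist m x = dist ρ x - r :=
  ⟨hT.geodesic ρ x r, dist_geodesic_left hr, dist_geodesic_right hr⟩

end IsRealTree

section Proper
variable {X : Type*} [MetricSpace X] {ρ : X}
  (hρ : ∀ x : X, ∀ r ∈ Icc 0 (dist ρ x), ∃ m, dist ρ m = r ∧ dist m x = dist ρ x - r)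
include hρ

theorem isCompact_closedBall_of_forall_lt [CompleteSpace X] {R : ℝ}
    (hR : ∀ r < R, IsCompact (closedBall ρ r)) : IsCompact (closedBall ρ R) := by
  refine (totallyBounded_iff.2 fun ε hε => ?_).isCompact_of_isClosed isClosed_closedBall
  obtain ⟨s, hs, hcover⟩ :=
    totallyBounded_iff.1 (hR (R - ε / 2) (by linarith)).totallyBounded (ε / 2) (half_pos hε)
  -- `ρ` is added to cover the case `R < ε / 2`, where the smaller ball is empty.
  refine ⟨insert ρ s, hs.insert ρ, fun z hz => ?_⟩
  rw [mem_closedBall'] at hz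
  simp only [mem_iUnion, mem_insert_iff, exists_prop, exists_eq_or_imp, mem_ball]
  by_cases hzr : dist ρ z ≤ R - ε / 2
  · obtain ⟨y, hy, hzy⟩ := mem_iUnion₂.1 (hcover (mem_closedBall'.2 hzr))
    exact Or.inr ⟨y, hy, (mem_ball.1 hzy).trans (half_lt_self hε)⟩
  by_cases hε' : R - ε / 2 < 0
  · exact Or.inl (by rw [dist_comm]; linarith)
  obtain ⟨m, hρm, hmz⟩ := hρ z (R - ε / 2) ⟨by linarith, by linarith⟩
  obtain ⟨y, hy, hmy⟩ := mem_iUnion₂.1 (hcover (mem_closedBall'.2 hρm.le))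
  refine Or.inr ⟨y, hy, ?_⟩
  calc dist z y ≤ dist m z + dist m y := dist_triangle_left z y m
    _ < ε / 2 + ε / 2 := by linarith [mem_ball.1 hmy]
    _ = ε := add_halves ε

theorem exists_isCompact_closedBall_add [WeaklyLocallyCompactSpace X] {R : ℝ} (hR0 : 0 ≤ R)
    (hR : IsCompact (closedBall ρ R)) : ∃ δ > 0, IsCompact (closedBall ρ (R + δ)) := by
  obtain ⟨K, hK, hRK⟩ := exists_compact_superset hR
  obtain ⟨δ, hδ, hδK⟩ := hR.exists_thickening_subset_open isOpen_interior hRK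
  refine ⟨δ / 2, half_pos hδ, hK.of_isClosed_subset isClosed_closedBall fun z hz => ?_⟩
  rw [mem_closedBall'] at hz
  apply interior_subset
  by_cases hzR : dist ρ z ≤ R
  · exact hRK (mem_closedBall'.2 hzR)
  obtain ⟨m, hρm, hmz⟩ := hρ z R ⟨hR0, (not_le.1 hzR).le⟩
  refine hδK (mem_thickening_iff.2 ⟨m, mem_closedBall'.2 hρm.le, ?_⟩)
  rw [dist_comm, hmz]
  linarith

theorem properSpace_of_forall_exists_dist_eq [CompleteSpace X] [WeaklyLocallyCompactSpace X] :
    ProperSpace X := by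
  suffices h : ∀ R, IsCompact (closedBall ρ R) from
    .of_seq_closedBall tendsto_id (Eventually.of_forall h)
  by_contra! ⟨R₀, hR₀⟩
  set S := {R | ¬IsCompact (closedBall ρ R)}
  have hS0 : ∀ R ∈ S, 0 ≤ R := fun R hR => not_lt.1 fun hR' => hR (by
    rw [closedBall_eq_empty.2 hR']; exact isCompact_empty)
  have hS : BddBelow S := ⟨0, hS0⟩
  have hbelow : ∀ r < sInf S, IsCompact (closedBall ρ r) := fun r hr => by
    by_contra h
    exact (csInf_le hS h).not_gt hr
  have hinf := isCompact_closedBall_of_forall_lt hρ hbelow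
  obtain ⟨δ, hδ, hδc⟩ := exists_isCompact_closedBall_add hρ (le_csInf ⟨R₀, hR₀⟩ hS0) hinf
  have : sInf S + δ ≤ sInf S := le_csInf ⟨R₀, hR₀⟩ fun R hR => not_lt.1 fun hlt =>
    hR (hδc.of_isClosed_subset isClosed_closedBall (closedBall_subset_closedBall hlt.le))
  linarith

end Proper

theorem ellOne.norm_eq_tsum (f : ellOne) : ‖f‖ = ∑' n, |f n| := by
  simpa using lp.norm_eq_tsum_rpow (by simp : (0 : ℝ) < (1 : ENNReal).toReal) f

section Embedding
variable {X : Type*} [MetricSpace X] (ρ : X) (u : ℕ → X)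

def gromovSup (x : X) : ℕ → ℝ
  | 0 => 0
  | n + 1 => max (gromovSup x n) (gromovProduct ρ x (u n))

def gromovCoord (x : X) (n : ℕ) : ℝ := gromovSup ρ u x (n + 1) - gromovSup ρ u x n

variable {ρ u}

theorem gromovSup_mono (x : X) : Monotone (gromovSup ρ u x) :=
  monotone_nat_of_le_succ fun _ => le_max_left _ _

theorem gromovSup_le_dist (x : X) : ∀ n, gromovSup ρ u x n ≤ dist ρ x
  | 0 => dist_nonneg
  | n + 1 => max_le (gromovSup_le_dist x n) (gromovProduct_le_dist ρ x (u n))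

theorem gromovProduct_le_gromovSup (x : X) {k n : ℕ} (hkn : k < n) :
    gromovProduct ρ x (u k) ≤ gromovSup ρ u x n :=
  (le_max_right _ _).trans (gromovSup_mono x hkn)

theorem gromovSup_self_left : ∀ n, gromovSup ρ u ρ n = 0
  | 0 => rfl
  | n + 1 => by rw [gromovSup, gromovSup_self_left n, gromovProduct_self_left, max_self]

theorem tendsto_gromovSup (hu : DenseRange u) (x : X) :
    Tendsto (gromovSup ρ u x) atTop (𝓝 (dist ρ x)) := by
  refine Metric.tendsto_atTop.2 fun ε hε => ?_
  obtain ⟨k, hk⟩ := hu.exists_dist_lt x hε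
  refine ⟨k + 1, fun n hn => ?_⟩
  have := gromovProduct_le_gromovSup (ρ := ρ) (u := u) x (Nat.lt_of_succ_le hn)
  rw [Real.dist_eq, abs_sub_lt_iff]
  constructor <;>
    linarith [gromovSup_le_dist (ρ := ρ) (u := u) x n, dist_sub_dist_le_gromovProduct ρ x (u k)]

theorem gromovCoord_nonneg (x : X) (n : ℕ) : 0 ≤ gromovCoord ρ u x n :=
  sub_nonneg.2 (gromovSup_mono x n.le_succ)

theorem sum_gromovCoord (x : X) (n : ℕ) :
    ∑ i ∈ Finset.range n, gromovCoord ρ u x i = gromovSup ρ u x n := by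
  simp only [gromovCoord]
  rw [Finset.sum_range_sub, gromovSup, sub_zero]

theorem memℓp_gromovCoord (x : X) : Memℓp (gromovCoord ρ u x) 1 := by
  refine memℓp_gen ?_
  simp only [ENNReal.toReal_one, Real.rpow_one, Real.norm_eq_abs,
    abs_of_nonneg (gromovCoord_nonneg _ _)]
  exact summable_of_sum_range_le (gromovCoord_nonneg x) fun n =>
    (sum_gromovCoord x n).trans_le (gromovSup_le_dist x n)

variable (ρ u) in
def gromovEmbedding (x : X) : ellOne := ⟨gromovCoord ρ u x, memℓp_gromovCoord x⟩

theorem gromovEmbedding_base : gromovEmbedding ρ u ρ = 0 := by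
  ext n
  simp [gromovEmbedding, gromovCoord, gromovSup_self_left]

variable (h : IsZeroHyperbolic ρ)
include h

theorem IsZeroHyperbolic.min_gromovSup_eq (x y : X) (n : ℕ) :
    min (gromovSup ρ u x n) (gromovProduct ρ x y) =
      min (gromovSup ρ u y n) (gromovProduct ρ x y) := by
  induction n with
  | zero => rfl
  | succ n ih =>
    rw [gromovSup, gromovSup, min_max_distrib_right, min_max_distrib_right, ih, h.min_eq x y (u n)]

/-- Writing `t = min t g + (max t g - g)` with `g = (x|y)`, the two `min` parts move together, and
at each step at most one of the two `max` parts moves, since `min (x|u) (y|u) ≤ g`. -/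
theorem IsZeroHyperbolic.sum_abs_gromovCoord_sub (x y : X) (n : ℕ) :
    ∑ i ∈ Finset.range n, |gromovCoord ρ u x i - gromovCoord ρ u y i| =
      max (gromovSup ρ u x n) (gromovProduct ρ x y) +
        max (gromovSup ρ u y n) (gromovProduct ρ x y) - 2 * gromovProduct ρ x y := by
  set g := gromovProduct ρ x y
  induction n with
  | zero =>
    rw [Finset.sum_range_zero, gromovSup, gromovSup, max_eq_right (gromovProduct_nonneg ρ x y)]
    ring
  | succ n ih =>
    have hstep : gromovCoord ρ u x n - gromovCoord ρ u y n =
        (max (gromovSup ρ u x (n + 1)) g - max (gromovSup ρ u x n) g) -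
          (max (gromovSup ρ u y (n + 1)) g - max (gromovSup ρ u y n) g) := by
      rw [gromovCoord, gromovCoord]
      linarith [min_add_max (gromovSup ρ u x n) g, min_add_max (gromovSup ρ u x (n + 1)) g,
        min_add_max (gromovSup ρ u y n) g, min_add_max (gromovSup ρ u y (n + 1)) g,
        h.min_gromovSup_eq (u := u) x y n, h.min_gromovSup_eq (u := u) x y (n + 1)]
    have hmono (z : X) : max (gromovSup ρ u z n) g ≤ max (gromovSup ρ u z (n + 1)) g :=
      max_le_max_right g (gromovSup_mono z n.le_succ)
    have hconst (z : X) (hz : gromovProduct ρ z (u n) ≤ g) :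
        max (gromovSup ρ u z (n + 1)) g = max (gromovSup ρ u z n) g := by
      rw [gromovSup, max_assoc, max_eq_right hz]
    have hone : gromovProduct ρ x (u n) ≤ g ∨ gromovProduct ρ y (u n) ≤ g := by
      have := h x (u n) y
      rw [gromovProduct_comm ρ (u n) y] at this
      exact (le_total _ _).imp (fun hle => (min_eq_left hle).symm.le.trans this)
        fun hle => (min_eq_right hle).symm.le.trans this
    rw [Finset.sum_range_succ, ih, hstep]
    rcases hone with hx | hy
    · rw [hconst x hx, sub_self, zero_sub, abs_neg, abs_of_nonneg (sub_nonneg.2 (hmono y))]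
      ring
    · rw [hconst y hy, sub_self, sub_zero, abs_of_nonneg (sub_nonneg.2 (hmono x))]
      ring

theorem IsZeroHyperbolic.hasSum_abs_gromovCoord_sub (hu : DenseRange u) (x y : X) :
    HasSum (fun i => |gromovCoord ρ u x i - gromovCoord ρ u y i|) (dist x y) := by
  rw [hasSum_iff_tendsto_nat_of_nonneg (fun _ => abs_nonneg _)]
  simp only [h.sum_abs_gromovCoord_sub]
  have hlim : max (dist ρ x) (gromovProduct ρ x y) + max (dist ρ y) (gromovProduct ρ x y)
      - 2 * gromovProduct ρ x y = dist x y := by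
    rw [max_eq_left (gromovProduct_le_dist ρ x y), max_eq_left
      (gromovProduct_comm ρ x y ▸ gromovProduct_le_dist ρ y x), gromovProduct]
    ring
  rw [← hlim]
  exact (((tendsto_gromovSup hu x).max tendsto_const_nhds).add
    ((tendsto_gromovSup hu y).max tendsto_const_nhds)).sub_const _

theorem IsZeroHyperbolic.isometry_gromovEmbedding (hu : DenseRange u) :
    Isometry (gromovEmbedding ρ u) := Isometry.of_dist_eq fun x y => by
  rw [dist_eq_norm, ellOne.norm_eq_tsum]
  exact (h.hasSum_abs_gromovCoord_sub hu x y).tsum_eq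

theorem IsZeroHyperbolic.exists_isometry_ellOne [TopologicalSpace.SeparableSpace X] :
    ∃ f : X → ellOne, Isometry f ∧ f ρ = 0 := by
  have : Nonempty X := ⟨ρ⟩
  obtain ⟨u, hu⟩ := TopologicalSpace.exists_dense_seq X
  exact ⟨gromovEmbedding ρ u, h.isometry_gromovEmbedding hu, gromovEmbedding_base⟩

end Embedding

/-- Every complete, locally compact rooted real tree embeds isometrically into `ℓ¹(ℕ)`, root to
`0`; in particular its pointed isometry class has a representative in `𝕋_{ℓ¹}`. -/
theorem embeds_in_ellOne (T : Type*) [MetricSpace T] [CompleteSpace T] [LocallyCompactSpace T]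
    (ρ : T) (hT : IsRealTree T) :
    (∃ f : T → ellOne, Isometry f ∧ f ρ = 0) ∧
    ∃ S : TreeL1, PointedIsometric T ρ ↥S.1 ⟨0, S.2.1⟩ := by
  have : ProperSpace T := properSpace_of_forall_exists_dist_eq (hT.exists_dist_eq ρ)
  obtain ⟨F, hF, hFρ⟩ := (hT.isZeroHyperbolic ρ).exists_isometry_ellOne
  let e : T ≃ᵢ range F := hF.isometryEquivOnRange
  have : LocallyCompactSpace (range F) := e.toHomeomorph.locallyCompactSpace_iff.1 inferInstance
  exact ⟨⟨F, hF, hFρ⟩, ⟨range F, ⟨ρ, hFρ⟩, hF.isUniformInducing.isComplete_range, this,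
    hT.of_isometryEquiv e⟩, e, e.isometry, e.bijective, Subtype.ext hFρ⟩

end
end

section
/- Let ψ be a branching mechanism and let 0 ≤ p < q with μ := ψ(p) and λ := ψ(q) satisfying 0 ≤ μ < λ. Then ψ'(q) > 0, and the numbers ξ_{μ,λ}(0) = (λ−μ)/((q−p) ψ'(q)), ξ_{μ,λ}(1) = 0, and ξ_{μ,λ}(k) = |ψ^{(k)}(q)| (q−p)^{k−1}/(k! ψ'(q)) for k ≥ 2, form a probability distribution on ℕ whose generating function is φ_{μ,λ}(s) = Σ_{k≥0} ξ_{μ,λ}(k) s^k = s + ( ψ(q − s(q−p)) − μ )/((q−p) ψ'(q)) for s ∈ [0,1]. Moreover, if p > 0 then φ'_{μ,λ}(1) = 1 − ψ'(p)/ψ'(q) ≤ 1, with strict inequality whenever ψ'(p) > 0. -/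
open MeasureTheory

/-- `ψ` is a branching mechanism with parameters `(α, β, ν)`:
`ψ(c) = αc + βc² + ∫ (e^{-cx} - 1 + cx 1_{x<1}) ν(dx)` for all `c ≥ 0`, where `β ≥ 0` and
`ν` is a measure on `(0,∞)` with `∫ min(1,x²) ν(dx) < ∞`. -/
def IsBMWith (ψ : ℝ → ℝ) (α β : ℝ) (ν : Measure ℝ) : Prop :=
  0 ≤ β ∧ ν (Set.Iic 0) = 0 ∧ (∫⁻ x, ENNReal.ofReal (min 1 (x ^ 2)) ∂ν) < ⊤ ∧
    ∀ c : ℝ, 0 ≤ c →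
      ψ c = α * c + β * c ^ 2
        + ∫ x, (Real.exp (-(c * x)) - 1 + (if x < 1 then c * x else 0)) ∂ν

/-- `ψ` is a branching mechanism: it is of Lévy–Khintchine form for some parameters. -/
def IsBranchingMechanism (ψ : ℝ → ℝ) : Prop :=
  ∃ (α β : ℝ) (ν : Measure ℝ), IsBMWith ψ α β ν

/-- The offspring distribution `ξ_{μ,λ}` associated with a branching mechanism `ψ` at
`p = ψ^{-1}(μ)`, `q = ψ^{-1}(λ)` (so `μ = ψ(p)`, `λ = ψ(q)`). -/
noncomputable def xiML (ψ : ℝ → ℝ) (p q : ℝ) : ℕ → ℝ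
  | 0 => (ψ q - ψ p) / ((q - p) * derivWithin ψ (Set.Ioi 0) q)
  | 1 => 0
  | (k + 2) => |iteratedDerivWithin (k + 2) ψ (Set.Ioi 0) q| * (q - p) ^ (k + 1) /
      ((Nat.factorial (k + 2) : ℝ) * derivWithin ψ (Set.Ioi 0) q)

/-!
On `(0, ∞)` the Lévy–Khintchine integral may be differentiated under the integral sign:
`ψ''(c) = 2β + ∫ x² e^{-cx} ν(dx)` and `ψ⁽ᵏ⁾(c) = (-1)ᵏ ∫ xᵏ e^{-cx} ν(dx)` for `k ≥ 3`, so
`(-1)ᵏ ψ⁽ᵏ⁾(q) = |ψ⁽ᵏ⁾(q)|` for `k ≥ 2`. Expanding `e^{tx}` in its power series and exchanging sum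
and integral (all terms are nonnegative) gives the Taylor expansions
`ψ(q - t) = ψ(q) - t ψ'(q) + ∑_{k ≥ 2} |ψ⁽ᵏ⁾(q)| tᵏ / k!` for `0 ≤ t ≤ q` and
`ψ'(q - u) = ψ'(q) - ∑_{k ≥ 2} |ψ⁽ᵏ⁾(q)| uᵏ⁻¹ / (k - 1)!` for `0 ≤ u < q`.
With `t = s (q - p)` the first one is the generating function identity, and at `s = 1` it shows
both that the total mass is `1` and that `(q - p) ψ'(q) ≥ ψ(q) - ψ(p) > 0`; the second one with
`u = q - p` gives the mean. Finally `p ψ'(p) ≥ ψ(p) - ψ(0) = ψ(p) ≥ 0`.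
-/

open Filter Set Real
open scoped Nat Topology

lemma exp_neg_sub_one_add_le_sq {y : ℝ} (hy : 0 ≤ y) : exp (-y) - 1 + y ≤ y ^ 2 := by
  rcases le_or_gt y 1 with h | h
  · have h2 := abs_le.1 (abs_exp_sub_one_sub_id_le (x := -y) (by rwa [abs_neg, abs_of_nonneg hy]))
    nlinarith [h2.2]
  · nlinarith [exp_le_one_iff.mpr (by linarith : -y ≤ 0)]

lemma pow_mul_exp_neg_mul_le {c x : ℝ} (hc : 0 < c) (hx : 0 ≤ x) (k : ℕ) :
    x ^ k * exp (-(c * x)) ≤ k ! / c ^ k := by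
  have h := pow_div_factorial_le_exp (c * x) (by positivity) k
  rw [div_le_iff₀ (by positivity), mul_pow, ← le_div_iff₀' (by positivity)] at h
  calc x ^ k * exp (-(c * x)) ≤ exp (c * x) * k ! / c ^ k * exp (-(c * x)) := by gcongr
    _ = k ! / c ^ k := by
        rw [div_mul_eq_mul_div, mul_right_comm, ← exp_add, add_neg_cancel, exp_zero, one_mul]

lemma pow_mul_exp_neg_mul_le_mul_min {k : ℕ} (hk : 2 ≤ k) {c x : ℝ} (hc : 0 < c) (hx : 0 < x) :
    x ^ k * exp (-(c * x)) ≤ max 1 (k ! / c ^ k) * min 1 (x ^ 2) := by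
  rcases le_or_gt x 1 with h | h
  · rw [min_eq_right (by nlinarith)]
    calc x ^ k * exp (-(c * x)) ≤ x ^ 2 * 1 :=
          mul_le_mul (pow_le_pow_of_le_one hx.le h hk) (exp_le_one_iff.mpr (by nlinarith))
            (exp_pos _).le (by positivity)
      _ ≤ max 1 (k ! / c ^ k) * x ^ 2 := by
          rw [mul_one]; exact le_mul_of_one_le_left (by positivity) (le_max_left _ _)
  · rw [min_eq_left (by nlinarith), mul_one]
    exact le_max_of_le_right (pow_mul_exp_neg_mul_le hc hx.le k)

lemma hasSum_pow_div_factorial_add_one (y : ℝ) :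
    HasSum (fun k : ℕ => y ^ (k + 1) / (k + 1)!) (exp y - 1) := by
  have h := NormedSpace.expSeries_div_hasSum_exp (𝔸 := ℝ) y
  rw [← exp_eq_exp_ℝ, ← hasSum_nat_add_iff' 1] at h
  simpa using h

lemma hasSum_pow_div_factorial_add_two (y : ℝ) :
    HasSum (fun k : ℕ => y ^ (k + 2) / (k + 2)!) (exp y - 1 - y) := by
  have h := NormedSpace.expSeries_div_hasSum_exp (𝔸 := ℝ) y
  rw [← exp_eq_exp_ℝ, ← hasSum_nat_add_iff' 2] at h
  simpa [Finset.sum_range_succ, sub_sub] using h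

noncomputable def bmKernel (c x : ℝ) : ℝ := exp (-(c * x)) - 1 + (if x < 1 then c * x else 0)

noncomputable def bmKernelDeriv (c x : ℝ) : ℝ := (if x < 1 then x else 0) - x * exp (-(c * x))

lemma measurable_bmKernel (c : ℝ) : Measurable (bmKernel c) :=
  (by fun_prop : Measurable fun x => exp (-(c * x)) - 1).add
    (Measurable.ite measurableSet_Iio (by fun_prop) (by fun_prop))

lemma measurable_bmKernelDeriv (c : ℝ) : Measurable (bmKernelDeriv c) :=
  (Measurable.ite measurableSet_Iio (by fun_prop) (by fun_prop)).sub (by fun_prop)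

lemma hasDerivAt_exp_neg_mul (x c : ℝ) :
    HasDerivAt (fun c => exp (-(c * x))) (-x * exp (-(c * x))) c :=
  (((hasDerivAt_id c).mul_const x).neg.exp).congr_deriv (by simp only [id_eq, Pi.neg_apply]; ring)

lemma hasDerivAt_bmKernel (x c : ℝ) : HasDerivAt (bmKernel · x) (bmKernelDeriv c x) c := by
  unfold bmKernel bmKernelDeriv
  split_ifs
  · exact (((hasDerivAt_exp_neg_mul x c).sub_const 1).add (hasDerivAt_mul_const x)).congr_deriv
      (by ring)
  · exact (((hasDerivAt_exp_neg_mul x c).sub_const 1).add_const 0).congr_deriv (by ring)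

lemma hasDerivAt_bmKernelDeriv (x c : ℝ) :
    HasDerivAt (bmKernelDeriv · x) (x ^ 2 * exp (-(c * x))) c :=
  (((hasDerivAt_exp_neg_mul x c).const_mul x).const_sub _).congr_deriv (by ring)

lemma hasDerivAt_pow_mul_exp_neg_mul (k : ℕ) (x c : ℝ) :
    HasDerivAt (fun c => x ^ k * exp (-(c * x))) (-(x ^ (k + 1) * exp (-(c * x)))) c :=
  ((hasDerivAt_exp_neg_mul x c).const_mul (x ^ k)).congr_deriv (by ring)

lemma abs_bmKernel_le {c x : ℝ} (hc : 0 ≤ c) (hx : 0 < x) :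
    |bmKernel c x| ≤ max 1 (c ^ 2) * min 1 (x ^ 2) := by
  unfold bmKernel
  have hexp : exp (-(c * x)) ≤ 1 := exp_le_one_iff.mpr (by nlinarith)
  split_ifs with h
  · rw [min_eq_right (by nlinarith), abs_of_nonneg (by linarith [add_one_le_exp (-(c * x))])]
    calc exp (-(c * x)) - 1 + c * x ≤ c ^ 2 * x ^ 2 := by
          nlinarith [exp_neg_sub_one_add_le_sq (by positivity : 0 ≤ c * x)]
      _ ≤ max 1 (c ^ 2) * x ^ 2 := by gcongr; exact le_max_right _ _
  · rw [min_eq_left (by nlinarith), mul_one, add_zero, abs_of_nonpos (by linarith)]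
    linarith [exp_pos (-(c * x)), le_max_left 1 (c ^ 2)]

lemma abs_bmKernelDeriv_le {b c B x : ℝ} (hb : 0 < b) (hbc : b ≤ c) (hcB : c ≤ B) (hx : 0 < x) :
    |bmKernelDeriv c x| ≤ max B b⁻¹ * min 1 (x ^ 2) := by
  unfold bmKernelDeriv
  have hexp : exp (-(c * x)) ≤ 1 := exp_le_one_iff.mpr (by nlinarith)
  split_ifs with h
  · rw [min_eq_right (by nlinarith), abs_of_nonneg (by nlinarith)]
    calc x - x * exp (-(c * x)) ≤ c * x ^ 2 := by nlinarith [add_one_le_exp (-(c * x))]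
      _ ≤ max B b⁻¹ * x ^ 2 := by gcongr; exact hcB.trans (le_max_left _ _)
  · rw [min_eq_left (by nlinarith), mul_one, zero_sub, abs_neg, abs_of_nonneg (by positivity)]
    calc x * exp (-(c * x)) ≤ x ^ 1 * exp (-(b * x)) := by
          rw [pow_one]; gcongr
      _ ≤ 1 ! / b ^ 1 := pow_mul_exp_neg_mul_le hb hx.le 1
      _ ≤ max B b⁻¹ := by simp

lemma bmKernel_sub_add_mul_bmKernelDeriv (q t x : ℝ) :
    bmKernel (q - t) x - bmKernel q x + t * bmKernelDeriv q x
      = exp (-(q * x)) * (exp (t * x) - 1 - t * x) := by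
  have he : exp (-((q - t) * x)) = exp (-(q * x)) * exp (t * x) := by rw [← exp_add]; ring_nf
  unfold bmKernel bmKernelDeriv
  split_ifs <;> rw [he] <;> ring

lemma bmKernelDeriv_sub (q u x : ℝ) :
    bmKernelDeriv q x - bmKernelDeriv (q - u) x = x * exp (-(q * x)) * (exp (u * x) - 1) := by
  have he : exp (-((q - u) * x)) = exp (-(q * x)) * exp (u * x) := by rw [← exp_add]; ring_nf
  unfold bmKernelDeriv
  rw [he]
  ring

structure IsLevyMeasure (ν : Measure ℝ) : Prop where
  ae_pos : ∀ᵐ x ∂ν, 0 < x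
  integrable_min_one_sq : Integrable (fun x => min 1 (x ^ 2)) ν

noncomputable def expMoment (ν : Measure ℝ) (k : ℕ) (c : ℝ) : ℝ := ∫ x, x ^ k * exp (-(c * x)) ∂ν

theorem hasSum_integral_of_nonneg {α ι : Type*} [MeasurableSpace α] [Countable ι] {μ : Measure α}
    {f : ι → α → ℝ} {g : α → ℝ} (hf_meas : ∀ k, AEStronglyMeasurable (f k) μ)
    (hf_nonneg : ∀ k, 0 ≤ᵐ[μ] f k) (hfg : ∀ᵐ x ∂μ, HasSum (fun k => f k x) (g x))
    (hg : Integrable g μ) :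
    HasSum (fun k => ∫ x, f k x ∂μ) (∫ x, g x ∂μ) :=
  hasSum_integral_of_dominated_convergence f hf_meas
    (fun k => (hf_nonneg k).mono fun _ hx => (norm_of_nonneg hx).le)
    (hfg.mono fun _ hx => hx.summable) (hg.congr (hfg.mono fun _ hx => hx.tsum_eq.symm)) hfg

namespace IsLevyMeasure

variable {ν : Measure ℝ}

lemma integrable_of_abs_le (hν : IsLevyMeasure ν) {f : ℝ → ℝ} {C : ℝ}
    (hf : AEStronglyMeasurable f ν) (h : ∀ x, 0 < x → |f x| ≤ C * min 1 (x ^ 2)) :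
    Integrable f ν :=
  (hν.integrable_min_one_sq.const_mul C).mono' hf (hν.ae_pos.mono h)

lemma hasDerivAt_integral (hν : IsLevyMeasure ν) {F F' : ℝ → ℝ → ℝ} {c C : ℝ} {s : Set ℝ}
    (hs : s ∈ 𝓝 c) (hF_meas : ∀ c, Measurable (F c)) (hF'_meas : Measurable (F' c))
    (hF_int : Integrable (F c) ν)
    (h_bound : ∀ c' ∈ s, ∀ x, 0 < x → |F' c' x| ≤ C * min 1 (x ^ 2))
    (h_diff : ∀ c' x, HasDerivAt (F · x) (F' c' x) c') :
    HasDerivAt (fun c => ∫ x, F c x ∂ν) (∫ x, F' c x ∂ν) c :=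
  (hasDerivAt_integral_of_dominated_loc_of_deriv_le hs
    (.of_forall fun c => (hF_meas c).aestronglyMeasurable) hF_int hF'_meas.aestronglyMeasurable
    (hν.ae_pos.mono fun x hx c' hc' => h_bound c' hc' x hx)
    (hν.integrable_min_one_sq.const_mul C) (.of_forall fun x c' _ => h_diff c' x)).2

lemma integrable_bmKernel (hν : IsLevyMeasure ν) {c : ℝ} (hc : 0 ≤ c) :
    Integrable (bmKernel c) ν :=
  hν.integrable_of_abs_le (measurable_bmKernel c).aestronglyMeasurable
    fun _ hx => abs_bmKernel_le hc hx

lemma integrable_bmKernelDeriv (hν : IsLevyMeasure ν) {c : ℝ} (hc : 0 < c) :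
    Integrable (bmKernelDeriv c) ν :=
  hν.integrable_of_abs_le (measurable_bmKernelDeriv c).aestronglyMeasurable
    fun _ hx => abs_bmKernelDeriv_le hc le_rfl le_rfl hx

lemma integrable_pow_mul_exp_neg_mul (hν : IsLevyMeasure ν) {k : ℕ} (hk : 2 ≤ k) {c : ℝ}
    (hc : 0 < c) : Integrable (fun x => x ^ k * exp (-(c * x))) ν :=
  hν.integrable_of_abs_le (by fun_prop) fun x hx => by
    rw [abs_of_nonneg (by positivity)]
    exact pow_mul_exp_neg_mul_le_mul_min hk hc hx

lemma expMoment_nonneg (hν : IsLevyMeasure ν) (k : ℕ) (c : ℝ) : 0 ≤ expMoment ν k c :=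
  integral_nonneg_of_ae (hν.ae_pos.mono fun x hx => by positivity)

lemma hasDerivAt_integral_bmKernel (hν : IsLevyMeasure ν) {c : ℝ} (hc : 0 < c) :
    HasDerivAt (fun c => ∫ x, bmKernel c x ∂ν) (∫ x, bmKernelDeriv c x ∂ν) c :=
  hν.hasDerivAt_integral (Ioo_mem_nhds (half_lt_self hc) (lt_two_mul_self hc))
    measurable_bmKernel (measurable_bmKernelDeriv c) (hν.integrable_bmKernel hc.le)
    (fun _ hc' _ hx => abs_bmKernelDeriv_le (half_pos hc) hc'.1.le hc'.2.le hx)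
    fun c' x => hasDerivAt_bmKernel x c'

lemma hasDerivAt_integral_bmKernelDeriv (hν : IsLevyMeasure ν) {c : ℝ} (hc : 0 < c) :
    HasDerivAt (fun c => ∫ x, bmKernelDeriv c x ∂ν) (expMoment ν 2 c) c :=
  hν.hasDerivAt_integral (Ioi_mem_nhds (half_lt_self hc)) measurable_bmKernelDeriv
    (by fun_prop) (hν.integrable_bmKernelDeriv hc)
    (fun c' hc' x hx => by
      rw [abs_of_nonneg (by positivity)]
      calc x ^ 2 * exp (-(c' * x)) ≤ x ^ 2 * exp (-(c / 2 * x)) := by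
            gcongr; exact (mem_Ioi.1 hc').le
        _ ≤ _ := pow_mul_exp_neg_mul_le_mul_min le_rfl (half_pos hc) hx)
    fun c' x => hasDerivAt_bmKernelDeriv x c'

lemma hasDerivAt_expMoment (hν : IsLevyMeasure ν) {k : ℕ} (hk : 2 ≤ k) {c : ℝ} (hc : 0 < c) :
    HasDerivAt (expMoment ν k) (-expMoment ν (k + 1) c) c := by
  rw [expMoment, ← integral_neg]
  exact hν.hasDerivAt_integral (Ioi_mem_nhds (half_lt_self hc)) (fun _ => by fun_prop)
    (by fun_prop) (hν.integrable_pow_mul_exp_neg_mul hk hc)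
    (fun c' hc' x hx => by
      rw [abs_neg, abs_of_nonneg (by positivity)]
      calc x ^ (k + 1) * exp (-(c' * x)) ≤ x ^ (k + 1) * exp (-(c / 2 * x)) := by
            gcongr; exact (mem_Ioi.1 hc').le
        _ ≤ _ := pow_mul_exp_neg_mul_le_mul_min (by omega) (half_pos hc) hx)
    fun c' x => hasDerivAt_pow_mul_exp_neg_mul k x c'

lemma hasSum_expMoment_taylor (hν : IsLevyMeasure ν) {q t : ℝ} (hq : 0 < q) (ht : 0 ≤ t)
    (htq : t ≤ q) :
    HasSum (fun k : ℕ => t ^ (k + 2) / (k + 2)! * expMoment ν (k + 2) q)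
      (∫ x, bmKernel (q - t) x ∂ν - ∫ x, bmKernel q x ∂ν + t * ∫ x, bmKernelDeriv q x ∂ν) := by
  have hKt := hν.integrable_bmKernel (sub_nonneg.2 htq)
  have hK := hν.integrable_bmKernel hq.le
  have hKK : Integrable (fun x => bmKernel (q - t) x - bmKernel q x) ν := hKt.sub hK
  have hH := (hν.integrable_bmKernelDeriv hq).const_mul t
  rw [← integral_sub hKt hK, ← integral_const_mul, ← integral_add hKK hH]
  simp only [expMoment, ← integral_const_mul]
  refine hasSum_integral_of_nonneg (fun k => by fun_prop)
    (fun k => hν.ae_pos.mono fun x hx => by positivity) (.of_forall fun x => ?_)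
    (hKK.add hH)
  rw [bmKernel_sub_add_mul_bmKernelDeriv]
  have hterm : (fun k : ℕ => t ^ (k + 2) / (k + 2)! * (x ^ (k + 2) * exp (-(q * x))))
      = fun k => exp (-(q * x)) * ((t * x) ^ (k + 2) / (k + 2)!) := by
    ext k; ring
  exact hterm ▸ (hasSum_pow_div_factorial_add_two (t * x)).mul_left _

lemma hasSum_expMoment_taylor_deriv (hν : IsLevyMeasure ν) {q u : ℝ} (hu : 0 ≤ u)
    (huq : u < q) :
    HasSum (fun k : ℕ => u ^ (k + 1) / (k + 1)! * expMoment ν (k + 2) q)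
      (∫ x, bmKernelDeriv q x ∂ν - ∫ x, bmKernelDeriv (q - u) x ∂ν) := by
  have hH := hν.integrable_bmKernelDeriv (hu.trans_lt huq)
  have hHu := hν.integrable_bmKernelDeriv (sub_pos.2 huq)
  rw [← integral_sub hH hHu]
  simp only [expMoment, ← integral_const_mul]
  refine hasSum_integral_of_nonneg (fun k => by fun_prop)
    (fun k => hν.ae_pos.mono fun x hx => by positivity) (.of_forall fun x => ?_) (hH.sub hHu)
  rw [bmKernelDeriv_sub]
  have hterm : (fun k : ℕ => u ^ (k + 1) / (k + 1)! * (x ^ (k + 2) * exp (-(q * x))))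
      = fun k => x * exp (-(q * x)) * ((u * x) ^ (k + 1) / (k + 1)!) := by
    ext k; ring
  exact hterm ▸ (hasSum_pow_div_factorial_add_one (u * x)).mul_left _

end IsLevyMeasure

noncomputable def bmDeriv (α β : ℝ) (ν : Measure ℝ) : ℕ → ℝ → ℝ
  | 0 => fun c => α * c + β * c ^ 2 + ∫ x, bmKernel c x ∂ν
  | 1 => fun c => α + 2 * β * c + ∫ x, bmKernelDeriv c x ∂ν
  | n + 2 => fun c => (if n = 0 then 2 * β else 0) + (-1) ^ n * expMoment ν (n + 2) c

lemma IsLevyMeasure.hasDerivAt_bmDeriv {ν : Measure ℝ} (hν : IsLevyMeasure ν) (α β : ℝ) :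
    ∀ (n : ℕ) {c : ℝ}, 0 < c → HasDerivAt (bmDeriv α β ν n) (bmDeriv α β ν (n + 1) c) c
  | 0, c, hc => by
    refine ((((hasDerivAt_id c).const_mul α).add ((hasDerivAt_pow 2 c).const_mul β)).add
      (hν.hasDerivAt_integral_bmKernel hc)).congr_deriv ?_
    simp only [bmDeriv]
    ring
  | 1, c, hc => by
    refine ((((hasDerivAt_id c).const_mul (2 * β)).const_add α).add
      (hν.hasDerivAt_integral_bmKernelDeriv hc)).congr_deriv ?_
    simp [bmDeriv]
  | n + 2, c, hc => by
    refine (((hν.hasDerivAt_expMoment (by omega) hc).const_mul ((-1) ^ n)).const_add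
      (if n = 0 then 2 * β else 0)).congr_deriv ?_
    simp only [bmDeriv, add_eq_zero, one_ne_zero, and_false, if_false, pow_succ]
    ring

namespace IsBMWith

variable {ψ : ℝ → ℝ} {α β : ℝ} {ν : Measure ℝ}

lemma isLevyMeasure (h : IsBMWith ψ α β ν) : IsLevyMeasure ν := by
  obtain ⟨-, hν0, hν2, -⟩ := h
  refine ⟨by simpa using measure_eq_zero_iff_ae_notMem.1 hν0, ⟨by fun_prop, ?_⟩⟩
  rwa [hasFiniteIntegral_iff_ofReal (.of_forall fun x => le_min zero_le_one (sq_nonneg x))]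

lemma eq_bmDeriv_zero (h : IsBMWith ψ α β ν) {c : ℝ} (hc : 0 ≤ c) : ψ c = bmDeriv α β ν 0 c :=
  h.2.2.2 c hc

lemma apply_zero (h : IsBMWith ψ α β ν) : ψ 0 = 0 := by
  simp [h.eq_bmDeriv_zero le_rfl, bmDeriv, bmKernel]

lemma iteratedDerivWithin_eq (h : IsBMWith ψ α β ν) (n : ℕ) {c : ℝ} (hc : 0 < c) :
    iteratedDerivWithin n ψ (Ioi 0) c = bmDeriv α β ν n c := by
  induction n generalizing c with
  | zero => exact h.eq_bmDeriv_zero hc.le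
  | succ n ih =>
    rw [iteratedDerivWithin_succ, derivWithin_of_isOpen isOpen_Ioi hc]
    rw [(eventuallyEq_of_mem (Ioi_mem_nhds hc) fun y hy => ih hy).deriv_eq]
    exact (h.isLevyMeasure.hasDerivAt_bmDeriv α β n hc).deriv

lemma derivWithin_eq (h : IsBMWith ψ α β ν) {c : ℝ} (hc : 0 < c) :
    derivWithin ψ (Ioi 0) c = bmDeriv α β ν 1 c := by
  simpa using h.iteratedDerivWithin_eq 1 hc

lemma abs_iteratedDerivWithin_add_two (h : IsBMWith ψ α β ν) (k : ℕ) {c : ℝ} (hc : 0 < c) :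
    |iteratedDerivWithin (k + 2) ψ (Ioi 0) c|
      = (if k = 0 then 2 * β else 0) + expMoment ν (k + 2) c := by
  have hβ : 0 ≤ (if k = 0 then 2 * β else 0) := by split_ifs <;> linarith [h.1]
  have hm := h.isLevyMeasure.expMoment_nonneg (k + 2) c
  have hsign : bmDeriv α β ν (k + 2) c
      = (-1) ^ k * ((if k = 0 then 2 * β else 0) + expMoment ν (k + 2) c) := by
    rcases k with _ | k <;> simp [bmDeriv]
  rw [h.iteratedDerivWithin_eq _ hc, hsign, abs_mul, abs_pow, abs_neg, abs_one, one_pow, one_mul,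
    abs_of_nonneg (add_nonneg hβ hm)]

lemma hasSum_taylor (h : IsBMWith ψ α β ν) {q t : ℝ} (hq : 0 < q) (ht : 0 ≤ t) (htq : t ≤ q) :
    HasSum (fun k : ℕ => |iteratedDerivWithin (k + 2) ψ (Ioi 0) q| * t ^ (k + 2) / (k + 2)!)
      (ψ (q - t) - ψ q + t * derivWithin ψ (Ioi 0) q) := by
  have hsum := (hasSum_ite_eq 0 (β * t ^ 2)).add
    (h.isLevyMeasure.hasSum_expMoment_taylor hq ht htq)
  have hterm : (fun k : ℕ => |iteratedDerivWithin (k + 2) ψ (Ioi 0) q| * t ^ (k + 2) / (k + 2)!)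
      = fun k => (if k = 0 then β * t ^ 2 else 0)
          + t ^ (k + 2) / (k + 2)! * expMoment ν (k + 2) q := by
    ext k
    rw [h.abs_iteratedDerivWithin_add_two k hq]
    rcases k with _ | k
    · simp only [↓reduceIte, zero_add, Nat.factorial_two, Nat.cast_ofNat]
      ring
    · simp only [Nat.add_eq_zero_iff, one_ne_zero, and_false, ↓reduceIte, zero_add]
      ring
  rw [hterm, h.eq_bmDeriv_zero (sub_nonneg.2 htq), h.eq_bmDeriv_zero hq.le, h.derivWithin_eq hq]
  convert hsum using 1
  simp only [bmDeriv]
  ring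

lemma hasSum_taylor_derivWithin (h : IsBMWith ψ α β ν) {q u : ℝ} (hu : 0 ≤ u) (huq : u < q) :
    HasSum (fun k : ℕ => |iteratedDerivWithin (k + 2) ψ (Ioi 0) q| * u ^ (k + 1) / (k + 1)!)
      (derivWithin ψ (Ioi 0) q - derivWithin ψ (Ioi 0) (q - u)) := by
  have hsum := (hasSum_ite_eq 0 (2 * β * u)).add
    (h.isLevyMeasure.hasSum_expMoment_taylor_deriv hu huq)
  have hterm : (fun k : ℕ => |iteratedDerivWithin (k + 2) ψ (Ioi 0) q| * u ^ (k + 1) / (k + 1)!)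
      = fun k => (if k = 0 then 2 * β * u else 0)
          + u ^ (k + 1) / (k + 1)! * expMoment ν (k + 2) q := by
    ext k
    rw [h.abs_iteratedDerivWithin_add_two k (hu.trans_lt huq)]
    rcases k with _ | k
    · simp only [↓reduceIte, zero_add, pow_one, Nat.factorial_one, Nat.cast_one, div_one]
      ring
    · simp only [Nat.add_eq_zero_iff, one_ne_zero, and_false, ↓reduceIte, zero_add]
      ring
  rw [hterm, h.derivWithin_eq (hu.trans_lt huq), h.derivWithin_eq (sub_pos.2 huq)]
  convert hsum using 1
  simp only [bmDeriv]
  ring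

end IsBMWith

namespace IsBranchingMechanism

variable {ψ : ℝ → ℝ}

lemma apply_zero (hψ : IsBranchingMechanism ψ) : ψ 0 = 0 := by
  obtain ⟨α, β, ν, h⟩ := hψ
  exact h.apply_zero

lemma hasSum_taylor (hψ : IsBranchingMechanism ψ) {q t : ℝ} (hq : 0 < q) (ht : 0 ≤ t)
    (htq : t ≤ q) :
    HasSum (fun k : ℕ => |iteratedDerivWithin (k + 2) ψ (Ioi 0) q| * t ^ (k + 2) / (k + 2)!)
      (ψ (q - t) - ψ q + t * derivWithin ψ (Ioi 0) q) := by
  obtain ⟨α, β, ν, h⟩ := hψ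
  exact h.hasSum_taylor hq ht htq

lemma hasSum_taylor_derivWithin (hψ : IsBranchingMechanism ψ) {q u : ℝ} (hu : 0 ≤ u)
    (huq : u < q) :
    HasSum (fun k : ℕ => |iteratedDerivWithin (k + 2) ψ (Ioi 0) q| * u ^ (k + 1) / (k + 1)!)
      (derivWithin ψ (Ioi 0) q - derivWithin ψ (Ioi 0) (q - u)) := by
  obtain ⟨α, β, ν, h⟩ := hψ
  exact h.hasSum_taylor_derivWithin hu huq

lemma sub_le_mul_derivWithin (hψ : IsBranchingMechanism ψ) {p q : ℝ} (hp : 0 ≤ p) (hpq : p ≤ q)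
    (hq : 0 < q) : ψ q - ψ p ≤ (q - p) * derivWithin ψ (Ioi 0) q := by
  have hqp : 0 ≤ q - p := sub_nonneg.2 hpq
  have h := hψ.hasSum_taylor hq hqp (sub_le_self q hp)
  rw [sub_sub_cancel] at h
  linarith [h.nonneg fun k => div_nonneg (mul_nonneg (abs_nonneg _) (pow_nonneg hqp _))
    (Nat.cast_nonneg _)]

end IsBranchingMechanism

section OffspringDistribution

variable {ψ : ℝ → ℝ} {p q : ℝ}

lemma xiML_nonneg (hpq : p < q) (hψpq : ψ p ≤ ψ q) (hD : 0 < derivWithin ψ (Ioi 0) q) :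
    ∀ k, 0 ≤ xiML ψ p q k
  | 0 => div_nonneg (sub_nonneg.2 hψpq) (mul_nonneg (sub_pos.2 hpq).le hD.le)
  | 1 => le_rfl
  | k + 2 => div_nonneg (mul_nonneg (abs_nonneg _) (pow_nonneg (sub_pos.2 hpq).le _))
      (by positivity)

lemma IsBranchingMechanism.hasSum_xiML_mul_pow (hψ : IsBranchingMechanism ψ) (hp : 0 ≤ p)
    (hpq : p < q) (hD : derivWithin ψ (Ioi 0) q ≠ 0) {s : ℝ} (hs : s ∈ Icc (0 : ℝ) 1) :
    HasSum (fun k => xiML ψ p q k * s ^ k)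
      (s + (ψ (q - s * (q - p)) - ψ p) / ((q - p) * derivWithin ψ (Ioi 0) q)) := by
  have hqp : q - p ≠ 0 := sub_ne_zero.2 hpq.ne'
  have hterm : (fun k => xiML ψ p q (k + 2) * s ^ (k + 2)) = fun k =>
      |iteratedDerivWithin (k + 2) ψ (Ioi 0) q| * (s * (q - p)) ^ (k + 2) / (k + 2)! /
        ((q - p) * derivWithin ψ (Ioi 0) q) := by
    ext k
    simp only [xiML, mul_pow]
    field_simp
    ring
  have hval : s + (ψ (q - s * (q - p)) - ψ p) / ((q - p) * derivWithin ψ (Ioi 0) q)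
        - ∑ k ∈ Finset.range 2, xiML ψ p q k * s ^ k
      = (ψ (q - s * (q - p)) - ψ q + s * (q - p) * derivWithin ψ (Ioi 0) q)
        / ((q - p) * derivWithin ψ (Ioi 0) q) := by
    simp only [Finset.sum_range_succ, Finset.sum_range_zero, xiML]
    field_simp
    ring
  rw [← hasSum_nat_add_iff' 2, hterm, hval]
  exact (hψ.hasSum_taylor (hp.trans_lt hpq) (mul_nonneg hs.1 (sub_nonneg.2 hpq.le))
    (by nlinarith [hs.2])).div_const _

lemma IsBranchingMechanism.hasSum_natCast_mul_xiML (hψ : IsBranchingMechanism ψ) (hp : 0 < p)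
    (hpq : p < q) (hD : derivWithin ψ (Ioi 0) q ≠ 0) :
    HasSum (fun k : ℕ => (k : ℝ) * xiML ψ p q k)
      (1 - derivWithin ψ (Ioi 0) p / derivWithin ψ (Ioi 0) q) := by
  have hterm : (fun k : ℕ => ((k + 2 : ℕ) : ℝ) * xiML ψ p q (k + 2)) = fun k =>
      |iteratedDerivWithin (k + 2) ψ (Ioi 0) q| * (q - p) ^ (k + 1) / (k + 1)! /
        derivWithin ψ (Ioi 0) q := by
    ext k
    simp only [xiML, Nat.factorial_succ (k + 1)]
    push_cast
    field_simp
    ring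
  have hval : 1 - derivWithin ψ (Ioi 0) p / derivWithin ψ (Ioi 0) q
        - ∑ k ∈ Finset.range 2, (k : ℝ) * xiML ψ p q k
      = (derivWithin ψ (Ioi 0) q - derivWithin ψ (Ioi 0) p) / derivWithin ψ (Ioi 0) q := by
    simp only [Finset.sum_range_succ, Finset.sum_range_zero, xiML]
    field_simp
    ring
  have hT := hψ.hasSum_taylor_derivWithin (sub_nonneg.2 hpq.le) (sub_lt_self q hp)
  rw [sub_sub_cancel] at hT
  rw [← hasSum_nat_add_iff' 2, hterm, hval]
  exact hT.div_const _

end OffspringDistribution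

/-- For a branching mechanism `ψ` and `0 ≤ p < q` with `0 ≤ μ = ψ(p) < λ = ψ(q)`: `ψ'(q) > 0`,
the family `ξ_{μ,λ}` is a probability distribution on `ℕ` with generating function
`φ_{μ,λ}(s) = s + (ψ(q - s(q-p)) - μ)/((q-p)ψ'(q))` on `[0,1]`; moreover, if `p > 0` then
`φ'_{μ,λ}(1) = 1 - ψ'(p)/ψ'(q) ≤ 1`, with strict inequality whenever `ψ'(p) > 0`. -/
theorem xiML_prob_and_pgf (ψ : ℝ → ℝ) (hψ : IsBranchingMechanism ψ)
    (p q : ℝ) (hp : 0 ≤ p) (hpq : p < q) (hμ : 0 ≤ ψ p) (hml : ψ p < ψ q) :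
    0 < derivWithin ψ (Set.Ioi 0) q ∧
    (∀ k : ℕ, 0 ≤ xiML ψ p q k) ∧
    Summable (xiML ψ p q) ∧ (∑' k : ℕ, xiML ψ p q k) = 1 ∧
    (∀ s ∈ Set.Icc (0 : ℝ) 1,
      (∑' k : ℕ, xiML ψ p q k * s ^ k)
        = s + (ψ (q - s * (q - p)) - ψ p) / ((q - p) * derivWithin ψ (Set.Ioi 0) q)) ∧
    (0 < p →
      Summable (fun k : ℕ => (k : ℝ) * xiML ψ p q k) ∧
      (∑' k : ℕ, (k : ℝ) * xiML ψ p q k)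
        = 1 - derivWithin ψ (Set.Ioi 0) p / derivWithin ψ (Set.Ioi 0) q ∧
      (∑' k : ℕ, (k : ℝ) * xiML ψ p q k) ≤ 1 ∧
      (0 < derivWithin ψ (Set.Ioi 0) p → (∑' k : ℕ, (k : ℝ) * xiML ψ p q k) < 1)) := by
  have hD : 0 < derivWithin ψ (Set.Ioi 0) q :=
    pos_of_mul_pos_right ((sub_pos.2 hml).trans_le
      (hψ.sub_le_mul_derivWithin hp hpq.le (hp.trans_lt hpq))) (sub_pos.2 hpq).le
  have hpgf := fun s hs => hψ.hasSum_xiML_mul_pow hp hpq hD.ne' (s := s) hs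
  have hsum : HasSum (xiML ψ p q) 1 := by simpa using hpgf 1 ⟨zero_le_one, le_rfl⟩
  refine ⟨hD, xiML_nonneg hpq hml.le hD, hsum.summable, hsum.tsum_eq,
    fun s hs => (hpgf s hs).tsum_eq, fun hp' => ?_⟩
  have hmean := hψ.hasSum_natCast_mul_xiML hp' hpq hD.ne'
  have hDp : 0 ≤ derivWithin ψ (Set.Ioi 0) p := by
    have h := hψ.sub_le_mul_derivWithin le_rfl hp'.le hp'
    rw [hψ.apply_zero, sub_zero, sub_zero] at h
    exact nonneg_of_mul_nonneg_right (hμ.trans h) hp'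
  rw [hmean.tsum_eq]
  exact ⟨hmean.summable, rfl, by linarith [div_nonneg hDp hD.le],
    fun hpos => by linarith [div_pos hpos hD]⟩
end
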